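/- Let Ã_k(z) := e^{-z} ∑_{n≥0} P(X_n = k) z^n/n!. Then Ã_0(z) = e^{-z}, and for k ≥ 0, Ã_{k+1}(z) = (1 − e^{-pz}) Ã_k(pz) + e^{-pz} Ã_{k+1}(qz). -/

import Mathlib

/-!
Write `a n k = P(X_n = k)` and `F_k(z) = ∑ a n k zⁿ/n!`, so that `Ã_k(z) = e^{-z} F_k(z)`.
Clearing the denominator `1 - qⁿ` in the recurrence gives
`a n (k+1) = qⁿ a n (k+1) + ∑_j C(n,j) (q^{n-j} - (q-p)^{n-j}) p^j a j k`,
a binomial convolution with the exponential series; coefficientwise it says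
`F_{k+1}(z) = F_{k+1}(qz) + (e^{qz} - e^{(q-p)z}) F_k(pz)`.
Multiplying by `e^{-z} = e^{-pz} e^{-qz}` gives the claim. All series converge absolutely
because `|a n k| ≤ 1`: the recurrence averages the previous column against the law of `I_n`.
-/

open Finset Real

noncomputable section

def egf (f : ℕ → ℝ) (z : ℝ) : ℝ := ∑' n, f n * z ^ n / n.factorial

lemma summable_norm_egf_of_abs_le {f : ℕ → ℝ} {C : ℝ} (hf : ∀ n, |f n| ≤ C) (z : ℝ) :
    Summable fun n => ‖f n * z ^ n / n.factorial‖ := by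
  refine .of_nonneg_of_le (fun _ => norm_nonneg _) (fun n => ?_)
    ((summable_pow_div_factorial |z|).mul_left C)
  rw [norm_eq_abs, abs_div, abs_mul, abs_pow, Nat.abs_cast, mul_div_assoc]
  exact mul_le_mul_of_nonneg_right (hf n) (by positivity)

lemma egf_mul_arg (f : ℕ → ℝ) (c z : ℝ) : egf f (c * z) = egf (fun n => c ^ n * f n) z :=
  tsum_congr fun n => by rw [mul_pow]; ring

lemma mul_pow_div_factorial_mul_pow_div_factorial {n j : ℕ} (hj : j ≤ n) (x c z : ℝ) :
    x * z ^ j / j.factorial * ((c * z) ^ (n - j) / (n - j).factorial)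
      = n.choose j * c ^ (n - j) * x * z ^ n / n.factorial := by
  have hfac : (n.choose j * j.factorial * (n - j).factorial : ℝ) = n.factorial := by
    exact_mod_cast Nat.choose_mul_factorial_mul_factorial hj
  have hz : z ^ j * z ^ (n - j) = z ^ n := by rw [← pow_add, Nat.add_sub_cancel' hj]
  have hchoose : (n.choose j : ℝ) ≠ 0 := by exact_mod_cast (Nat.choose_pos hj).ne'
  rw [← hfac, ← hz]
  field_simp
  ring

lemma hasSum_exp_mul_egf {f : ℕ → ℝ} {z : ℝ} (hf : Summable fun n => ‖f n * z ^ n / n.factorial‖)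
    (c : ℝ) :
    HasSum (fun n => (∑ j ∈ range (n + 1), n.choose j * c ^ (n - j) * f j) * z ^ n / n.factorial)
      (exp (c * z) * egf f z) := by
  have hexp : Summable fun n => ‖(c * z) ^ n / n.factorial‖ := by
    simpa using summable_norm_egf_of_abs_le (f := fun _ => 1) (fun _ => le_of_eq abs_one) (c * z)
  have hprod := hasSum_sum_range_mul_of_summable_norm hf hexp
  rw [(NormedSpace.expSeries_div_hasSum_exp (c * z)).tsum_eq, ← exp_eq_exp_ℝ] at hprod
  have hterm : (fun n => ∑ j ∈ range (n + 1),
      f j * z ^ j / j.factorial * ((c * z) ^ (n - j) / (n - j).factorial))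
      = fun n => (∑ j ∈ range (n + 1), n.choose j * c ^ (n - j) * f j) * z ^ n / n.factorial := by
    funext n
    rw [sum_mul, sum_div]
    exact sum_congr rfl fun j hj =>
      mul_pow_div_factorial_mul_pow_div_factorial (Nat.lt_succ_iff.mp (mem_range.mp hj)) _ _ _
  rwa [hterm, mul_comm] at hprod

lemma egf_eq_of_binomial_recurrence {f g : ℕ → ℝ} {p q r C D : ℝ} (hf : ∀ n, |f n| ≤ C)
    (hg : ∀ n, |g n| ≤ D)
    (hrec : ∀ n, g n = q ^ n * g n +
      ∑ j ∈ range (n + 1), n.choose j * (q ^ (n - j) - r ^ (n - j)) * (p ^ j * f j))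
    (z : ℝ) :
    egf g z = (exp (q * z) - exp (r * z)) * egf f (p * z) + egf g (q * z) := by
  have hpf : Summable fun n => ‖p ^ n * f n * z ^ n / n.factorial‖ :=
    (summable_norm_egf_of_abs_le hf (p * z)).congr fun n => by rw [mul_pow]; ring_nf
  have hsum := ((hasSum_exp_mul_egf hpf q).sub (hasSum_exp_mul_egf hpf r)).add
    (summable_norm_egf_of_abs_le hg (q * z)).of_norm.hasSum
  have hterm : egf g z = ∑' n, ((∑ j ∈ range (n + 1), n.choose j * q ^ (n - j) * (p ^ j * f j))
      * z ^ n / n.factorial - (∑ j ∈ range (n + 1), n.choose j * r ^ (n - j) * (p ^ j * f j))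
      * z ^ n / n.factorial + g n * (q * z) ^ n / n.factorial) := by
    refine tsum_congr fun n => ?_
    have hsplit : ∑ j ∈ range (n + 1), n.choose j * (q ^ (n - j) - r ^ (n - j)) * (p ^ j * f j)
        = ∑ j ∈ range (n + 1), n.choose j * q ^ (n - j) * (p ^ j * f j)
          - ∑ j ∈ range (n + 1), n.choose j * r ^ (n - j) * (p ^ j * f j) := by
      rw [← sum_sub_distrib]
      exact sum_congr rfl fun _ _ => by ring
    rw [mul_pow]
    linear_combination (z ^ n / n.factorial) * (hrec n + hsplit)
  rw [hterm, hsum.tsum_eq, egf_mul_arg f p, ← sub_mul]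
  rfl

lemma abs_le_one_of_eq_sum_mul {a w : ℕ → ℕ → ℝ} (hw : ∀ n j, 0 ≤ w n j)
    (hw1 : ∀ n, 1 ≤ n → ∑ j ∈ range n, w n j ≤ 1)
    (hrec : ∀ n, 1 ≤ n → ∀ k, a n (k + 1) = ∑ j ∈ range n, w n j * a j k)
    (ha0 : ∀ n, |a n 0| ≤ 1) (h0a : ∀ k, |a 0 (k + 1)| ≤ 1) (n k : ℕ) : |a n k| ≤ 1 := by
  induction k generalizing n with
  | zero => exact ha0 n
  | succ k ih =>
    rcases n.eq_zero_or_pos with rfl | hn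
    · exact h0a k
    calc |a n (k + 1)| = |∑ j ∈ range n, w n j * a j k| := by rw [hrec n hn k]
      _ ≤ ∑ j ∈ range n, w n j * |a j k| := by
        refine (abs_sum_le_sum_abs _ _).trans_eq (sum_congr rfl fun j _ => ?_)
        rw [abs_mul, abs_of_nonneg (hw n j)]
      _ ≤ ∑ j ∈ range n, w n j := sum_le_sum fun j _ => mul_le_of_le_one_right (hw n j) (ih j)
      _ ≤ 1 := hw1 n hn

/-- `P(I_n = j)`. -/
def splitWeight (p q : ℝ) (n j : ℕ) : ℝ :=
  n.choose j * (p ^ j * q ^ (n - j) - p ^ j * (q - p) ^ (n - j)) / (1 - q ^ n)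

lemma splitWeight_nonneg {p q : ℝ} (hp : 0 ≤ p) (hpq : p ≤ q) (hq : q ≤ 1) (n j : ℕ) :
    0 ≤ splitWeight p q n j := by
  have hpow : (q - p) ^ (n - j) ≤ q ^ (n - j) := pow_le_pow_left₀ (by linarith) (by linarith) _
  have hqn : q ^ n ≤ 1 := pow_le_one₀ (by linarith) hq
  unfold splitWeight
  rw [← mul_sub]
  exact div_nonneg (mul_nonneg (Nat.cast_nonneg _) (mul_nonneg (pow_nonneg hp j) (by linarith)))
    (by linarith)

lemma sum_range_choose_mul_sub {R : Type*} [CommRing R] (p q : R) (n : ℕ) :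
    ∑ j ∈ range n, n.choose j * (p ^ j * q ^ (n - j) - p ^ j * (q - p) ^ (n - j))
      = (p + q) ^ n - q ^ n := by
  have hlast : ∑ j ∈ range (n + 1), n.choose j * (p ^ j * q ^ (n - j) - p ^ j * (q - p) ^ (n - j))
      = ∑ j ∈ range n, n.choose j * (p ^ j * q ^ (n - j) - p ^ j * (q - p) ^ (n - j)) := by
    simp [sum_range_succ]
  rw [← hlast, show q ^ n = (p + (q - p)) ^ n by ring_nf, add_pow, add_pow, ← sum_sub_distrib]
  exact sum_congr rfl fun _ _ => by ring

lemma sum_splitWeight {p q : ℝ} {n : ℕ} (hpq : p + q = 1) (hqn : q ^ n ≠ 1) :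
    ∑ j ∈ range n, splitWeight p q n j = 1 := by
  unfold splitWeight
  rw [← sum_div, sum_range_choose_mul_sub, hpq, one_pow]
  exact div_self (sub_ne_zero.mpr hqn.symm)

lemma eq_pow_mul_add_sum_of_eq_sum_splitWeight {p q x : ℝ} {n : ℕ} {f : ℕ → ℝ} (hqn : q ^ n ≠ 1)
    (h : x = ∑ j ∈ range n, splitWeight p q n j * f j) :
    x = q ^ n * x +
      ∑ j ∈ range (n + 1), n.choose j * (q ^ (n - j) - (q - p) ^ (n - j)) * (p ^ j * f j) := by
  have hcleared : (1 - q ^ n) * x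
      = ∑ j ∈ range n, n.choose j * (p ^ j * q ^ (n - j) - p ^ j * (q - p) ^ (n - j)) * f j := by
    rw [h, mul_sum]
    exact sum_congr rfl fun j _ => by unfold splitWeight; field_simp
  have hlast : ∑ j ∈ range (n + 1), n.choose j * (q ^ (n - j) - (q - p) ^ (n - j)) * (p ^ j * f j)
      = ∑ j ∈ range n, n.choose j * (p ^ j * q ^ (n - j) - p ^ j * (q - p) ^ (n - j)) * f j := by
    rw [sum_range_succ, Nat.sub_self, pow_zero, pow_zero, sub_self, mul_zero, zero_mul, add_zero]
    exact sum_congr rfl fun _ _ => by ring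
  linear_combination hcleared - hlast

end

/-- With `Ã_k(z) := e^{-z} ∑_{n≥0} P(X_n = k) z^n/n!` for the binomial splitting
process, one has `Ã_0(z) = e^{-z}` and
`Ã_{k+1}(z) = (1 − e^{-pz}) Ã_k(pz) + e^{-pz} Ã_{k+1}(qz)`.
Here `a n k = P(X_n = k)`, determined by the distributional recurrence. -/
theorem stmt_10 (p q : ℝ) (hp : 0 < p) (hpq : p ≤ q) (hq : q = 1 - p)
    (a : ℕ → ℕ → ℝ) (ha00 : a 0 0 = 1) (ha0 : ∀ k, a 0 (k + 1) = 0)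
    (han0 : ∀ n, 1 ≤ n → a n 0 = 0)
    (harec : ∀ n, 1 ≤ n → ∀ k, a n (k + 1) =
      ∑ j ∈ Finset.range n, (n.choose j : ℝ) *
        (p ^ j * q ^ (n - j) - p ^ j * (q - p) ^ (n - j)) / (1 - q ^ n) * a j k)
    (A : ℕ → ℝ → ℝ)
    (hA : ∀ k z, A k z = Real.exp (-z) * ∑' n : ℕ, a n k * z ^ n / (n.factorial : ℝ)) :
    (∀ z : ℝ, A 0 z = Real.exp (-z)) ∧
    (∀ k : ℕ, ∀ z : ℝ, A (k + 1) z = (1 - Real.exp (-(p * z))) * A k (p * z)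
      + Real.exp (-(p * z)) * A (k + 1) (q * z)) := by
  have hq0 : 0 < q := hp.trans_le hpq
  have hqn : ∀ n, 1 ≤ n → q ^ n ≠ 1 := fun n hn => (pow_lt_one₀ hq0.le (by linarith) (by omega)).ne
  have hbound : ∀ n k, |a n k| ≤ 1 :=
    abs_le_one_of_eq_sum_mul (splitWeight_nonneg hp.le hpq (by linarith))
      (fun n hn => (sum_splitWeight (by linarith) (hqn n hn)).le) harec
      (fun | 0 => by simp [ha00] | n + 1 => by simp [han0 (n + 1) n.succ_pos])
      (fun k => by simp [ha0])
  have hA_egf : ∀ k z, A k z = exp (-z) * egf (fun n => a n k) z := hA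
  refine ⟨fun z => ?_, fun k z => ?_⟩
  · rw [hA, tsum_eq_single 0 fun n hn => by simp [han0 n (by omega)]]
    simp [ha00]
  have hrec : ∀ n, a n (k + 1) = q ^ n * a n (k + 1) +
      ∑ j ∈ range (n + 1), n.choose j * (q ^ (n - j) - (q - p) ^ (n - j)) * (p ^ j * a j k) := by
    intro n
    rcases n.eq_zero_or_pos with rfl | hn
    · simp
    · exact eq_pow_mul_add_sum_of_eq_sum_splitWeight (hqn n hn) (harec n hn k)
  rw [hA_egf, hA_egf, hA_egf, egf_eq_of_binomial_recurrence (hbound · k) (hbound · (k + 1)) hrec z]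
  have e1 : exp (-z) * exp (q * z) = exp (-(p * z)) := by rw [← exp_add, hq]; ring_nf
  have e2 : exp (-z) * exp ((q - p) * z) = exp (-(p * z)) * exp (-(p * z)) := by
    rw [← exp_add, ← exp_add, hq]; ring_nf
  have e3 : exp (-z) = exp (-(p * z)) * exp (-(q * z)) := by rw [← exp_add, hq]; ring_nf
  linear_combination (egf (fun n => a n k) (p * z)) * (e1 - e2)
    + egf (fun n => a n (k + 1)) (q * z) * e3
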